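/- arXiv:2110.12468 — 3 statements merged into one kernel-verified Lean document; each statement's English description precedes it below -/
import Mathlib

section
/- Under linear parameterization π_φ ∝ exp(ψ(s,a)ᵀφ) and Q_k(s,a) = θ_k(s)ᵀa, the stationary point φ_{k+1} of the OPO objective L(φ) = E_s[⟨Q_k(s,·) − λ_k log(π_φ(·|s)/π_0(·|s)), π_φ(·|s)⟩ − η_k KL(π_φ(·|s)‖π_k(·|s))] satisfies φ_{k+1} = (η_k φ_k + λ_k φ_0)/(η_k + λ_k) + (η_k+λ_k)^{-1} I_{φ_{k+1}}^{-1} E_s[∇_a Q_k(s, Π_{φ_{k+1}}(s)) ∇_φ Π_{φ_{k+1}}(s)], where Π_φ(s) = E_{a∼π_φ(·|s)}[a]. -/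
open Finset RealInnerProductSpace

/-- Energy-based (softmax) policy at a fixed state: π_φ(a) ∝ exp(ψ(a)ᵀφ). -/
noncomputable def pol {A : Type*} [Fintype A] {d : ℕ}
    (ψ : A → EuclideanSpace ℝ (Fin d)) (φ : EuclideanSpace ℝ (Fin d)) (a : A) : ℝ :=
  Real.exp (⟪ψ a, φ⟫ - Real.log (∑ b, Real.exp ⟪ψ b, φ⟫))

/-- Mean feature E_{a∼π_φ}[ψ(a)]. -/
noncomputable def meanFeat {A : Type*} [Fintype A] {d : ℕ}
    (ψ : A → EuclideanSpace ℝ (Fin d)) (φ : EuclideanSpace ℝ (Fin d)) :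
    EuclideanSpace ℝ (Fin d) :=
  ∑ a, pol ψ φ a • ψ a

/-- The per-state covariance Var_{a∼π_φ}[ψ(a)] applied to a vector w. -/
noncomputable def covApply {A : Type*} [Fintype A] {d : ℕ}
    (ψ : A → EuclideanSpace ℝ (Fin d)) (φ w : EuclideanSpace ℝ (Fin d)) :
    EuclideanSpace ℝ (Fin d) :=
  ∑ a, (pol ψ φ a * ⟪ψ a - meanFeat ψ φ, w⟫) • (ψ a - meanFeat ψ φ)

/-- The deterministic policy Π_φ(s) = E_{a∼π_φ(·|s)}[a] (actions embedded in ℝ^m). -/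
noncomputable def detPol {S A : Type*} [Fintype A] {d m : ℕ}
    (ψ : S → A → EuclideanSpace ℝ (Fin d)) (act : A → EuclideanSpace ℝ (Fin m))
    (φ : EuclideanSpace ℝ (Fin d)) (s : S) : EuclideanSpace ℝ (Fin m) :=
  ∑ a, pol (ψ s) φ a • act a

/-!
Differentiating `π_φ(a) = exp ℓ_φ(a)` gives the score `∇ ℓ_φ(a) = ψ(a) - E_{π_φ}[ψ]`, so the
gradient of `E_{π_φ}[g_φ]` is the covariance of `ψ` with `g_φ` plus `E_{π_φ}[∇ g_φ]`. For the
OPO objective, `g_φ = Q + λ ℓ_{φ₀} + η ℓ_{φ_k} - (λ + η) ℓ_φ`: the last term contributes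
`-(λ + η) E_{π_φ}[ψ - E ψ] = 0`, and, since `ℓ_φ(a) = ⟪ψ(a), φ⟫` up to a constant in `a`, the
log-terms contribute `-Var(ψ) (λ (φ - φ₀) + η (φ - φ_k))`. Stationarity therefore reads
`Cov(Q, ψ) = I_φ (λ (φ - φ₀) + η (φ - φ_k))`, and `Cov(Q, ψ)` is the gradient of `E_s[Q(s, Π_φ(s))]`
because `Q` is linear in the action.
-/

section Gradient

variable {F : Type*} [NormedAddCommGroup F] [InnerProductSpace ℝ F] [CompleteSpace F]
  {f : F → ℝ} {g x : F}

theorem HasGradientAt.const_mul (hf : HasGradientAt f g x) (c : ℝ) :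
    HasGradientAt (fun y => c * f y) (c • g) x := by
  rw [hasGradientAt_iff_hasFDerivAt] at hf ⊢
  simpa using hf.const_mul c

theorem HasGradientAt.fun_sum {ι : Type*} {u : Finset ι} {f : ι → F → ℝ} {g : ι → F}
    (h : ∀ i ∈ u, HasGradientAt (f i) (g i) x) :
    HasGradientAt (fun y => ∑ i ∈ u, f i y) (∑ i ∈ u, g i) x := by
  rw [hasGradientAt_iff_hasFDerivAt, map_sum]
  exact HasFDerivAt.fun_sum fun i hi => (hasGradientAt_iff_hasFDerivAt.mp (h i hi))

end Gradient

section Softmax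

variable {A : Type*} [Fintype A] {d : ℕ} (ψ : A → EuclideanSpace ℝ (Fin d))

noncomputable def logPartition (φ : EuclideanSpace ℝ (Fin d)) : ℝ :=
  Real.log (∑ b, Real.exp ⟪ψ b, φ⟫)

noncomputable def logPol (φ : EuclideanSpace ℝ (Fin d)) (a : A) : ℝ :=
  ⟪ψ a, φ⟫ - logPartition ψ φ

theorem pol_eq_exp_logPol (φ : EuclideanSpace ℝ (Fin d)) (a : A) :
    pol ψ φ a = Real.exp (logPol ψ φ a) :=
  rfl

theorem log_pol_div_pol (φ φ' : EuclideanSpace ℝ (Fin d)) (a : A) :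
    Real.log (pol ψ φ a / pol ψ φ' a) = logPol ψ φ a - logPol ψ φ' a := by
  rw [pol_eq_exp_logPol, pol_eq_exp_logPol, ← Real.exp_sub, Real.log_exp]

/-- `Cov_{a ∼ π_φ}(c(a), ψ(a))`, as a linear function of the payoff `c`. -/
noncomputable def featCov (φ : EuclideanSpace ℝ (Fin d)) :
    (A → ℝ) →ₗ[ℝ] EuclideanSpace ℝ (Fin d) where
  toFun c := ∑ a, (pol ψ φ a * c a) • (ψ a - meanFeat ψ φ)
  map_add' c c' := by
    simp only [Pi.add_apply, mul_add, add_smul, sum_add_distrib]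
  map_smul' r c := by
    simp only [Pi.smul_apply, smul_eq_mul, RingHom.id_apply, smul_sum, smul_smul]
    exact sum_congr rfl fun a _ => by ring_nf

theorem featCov_apply (φ : EuclideanSpace ℝ (Fin d)) (c : A → ℝ) :
    featCov ψ φ c = ∑ a, (pol ψ φ a * c a) • (ψ a - meanFeat ψ φ) :=
  rfl

variable [Nonempty A] (φ : EuclideanSpace ℝ (Fin d))

theorem sum_exp_inner_pos : 0 < ∑ b, Real.exp ⟪ψ b, φ⟫ :=
  sum_pos (fun _ _ => Real.exp_pos _) univ_nonempty

theorem pol_eq_div (a : A) : pol ψ φ a = Real.exp ⟪ψ a, φ⟫ / ∑ b, Real.exp ⟪ψ b, φ⟫ := by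
  rw [pol, Real.exp_sub, Real.exp_log (sum_exp_inner_pos ψ φ)]

theorem sum_pol : ∑ a, pol ψ φ a = 1 := by
  simp only [pol_eq_div, ← sum_div, div_self (sum_exp_inner_pos ψ φ).ne']

theorem sum_pol_smul_sub_meanFeat : ∑ a, pol ψ φ a • (ψ a - meanFeat ψ φ) = 0 := by
  simp only [smul_sub, sum_sub_distrib, ← sum_smul, sum_pol, one_smul, meanFeat, sub_self]

theorem featCov_const (C : ℝ) : featCov ψ φ (fun _ => C) = 0 := by
  simp only [featCov_apply, mul_comm _ C, ← smul_smul, ← smul_sum, sum_pol_smul_sub_meanFeat,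
    smul_zero]

theorem featCov_inner (v : EuclideanSpace ℝ (Fin d)) :
    featCov ψ φ (fun a => ⟪ψ a, v⟫) = covApply ψ φ v := by
  have hsplit : (fun a => ⟪ψ a, v⟫) =
      (fun a => ⟪ψ a - meanFeat ψ φ, v⟫) + fun _ => ⟪meanFeat ψ φ, v⟫ := by
    funext a
    simp [inner_sub_left]
  rw [hsplit, map_add, featCov_const, add_zero]
  rfl

theorem hasFDerivAt_logPol (a : A) :
    HasFDerivAt (fun φ => logPol ψ φ a) (innerSL ℝ (ψ a - meanFeat ψ φ)) φ := by
  have hinner (b : A) : HasFDerivAt (fun φ : EuclideanSpace ℝ (Fin d) => ⟪ψ b, φ⟫)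
      (innerSL ℝ (ψ b)) φ :=
    (innerSL ℝ (ψ b)).hasFDerivAt
  have hlogZ := (HasFDerivAt.fun_sum (u := univ) fun b _ => (hinner b).exp).log
    (sum_exp_inner_pos ψ φ).ne'
  refine ((hinner a).sub hlogZ).congr_fderiv ?_
  rw [map_sub, meanFeat, map_sum, smul_sum]
  congr 1
  refine sum_congr rfl fun b _ => ?_
  rw [map_smul, smul_smul, pol_eq_div, div_eq_inv_mul]

theorem hasGradientAt_sum_pol_mul_sub_logPol (r : A → ℝ) (β : ℝ) :
    HasGradientAt (fun φ => ∑ a, pol ψ φ a * (r a - β * logPol ψ φ a))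
      (featCov ψ φ fun a => r a - β * logPol ψ φ a) φ := by
  set score := fun a => ψ a - meanFeat ψ φ
  have hderiv : HasFDerivAt (fun φ => ∑ a, pol ψ φ a * (r a - β * logPol ψ φ a))
      (∑ a, (pol ψ φ a • -(β • innerSL ℝ (score a)) +
        (r a - β * logPol ψ φ a) • (pol ψ φ a • innerSL ℝ (score a)))) φ :=
    HasFDerivAt.fun_sum fun a _ => ((hasFDerivAt_logPol ψ φ a).exp).mul
      (((hasFDerivAt_logPol ψ φ a).const_mul β).const_sub (r a))
  have hmean (v : EuclideanSpace ℝ (Fin d)) : ∑ a, pol ψ φ a * ⟪score a, v⟫ = 0 := by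
    simpa only [sum_inner, real_inner_smul_left, inner_zero_left] using
      congrArg (⟪·, v⟫) (sum_pol_smul_sub_meanFeat ψ φ)
  rw [hasGradientAt_iff_hasFDerivAt]
  refine hderiv.congr_fderiv ?_
  ext v
  simp only [InnerProductSpace.toDual_apply_apply, featCov_apply, _root_.sum_apply, add_apply,
    smul_apply, neg_apply, innerSL_apply_apply, sum_inner, real_inner_smul_left, smul_eq_mul]
  have hterm (a : A) : pol ψ φ a * -(β * ⟪score a, v⟫) +
      (r a - β * logPol ψ φ a) * (pol ψ φ a * ⟪score a, v⟫) =
      pol ψ φ a * (r a - β * logPol ψ φ a) * ⟪score a, v⟫ -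
        β * (pol ψ φ a * ⟪score a, v⟫) := by
    ring
  rw [sum_congr rfl fun a _ => hterm a, sum_sub_distrib, ← mul_sum, hmean, mul_zero, sub_zero]

theorem hasGradientAt_sum_pol_mul (r : A → ℝ) :
    HasGradientAt (fun φ => ∑ a, pol ψ φ a * r a) (featCov ψ φ r) φ := by
  simpa using hasGradientAt_sum_pol_mul_sub_logPol ψ φ r 0

end Softmax

section OPO

variable {A : Type*} [Fintype A] {d : ℕ} (ψ : A → EuclideanSpace ℝ (Fin d))

/-- The OPO objective at a single state, with `c = Q_k(s, ·)`. -/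
noncomputable def opoObjective (c : A → ℝ) (lam η : ℝ) (φ0 φk φ : EuclideanSpace ℝ (Fin d)) : ℝ :=
  (∑ a, pol ψ φ a * (c a - lam * Real.log (pol ψ φ a / pol ψ φ0 a))) -
    η * ∑ a, pol ψ φ a * Real.log (pol ψ φ a / pol ψ φk a)

theorem opoObjective_eq (c : A → ℝ) (lam η : ℝ) (φ0 φk φ : EuclideanSpace ℝ (Fin d)) :
    opoObjective ψ c lam η φ0 φk φ = ∑ a, pol ψ φ a *
      ((c a + lam * logPol ψ φ0 a + η * logPol ψ φk a) - (lam + η) * logPol ψ φ a) := by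
  rw [opoObjective, mul_sum, ← sum_sub_distrib]
  refine sum_congr rfl fun a _ => ?_
  rw [log_pol_div_pol, log_pol_div_pol]
  ring

theorem hasGradientAt_opoObjective [Nonempty A] (c : A → ℝ) (lam η : ℝ)
    (φ0 φk φ : EuclideanSpace ℝ (Fin d)) :
    HasGradientAt (opoObjective ψ c lam η φ0 φk)
      (featCov ψ φ c - covApply ψ φ (lam • (φ - φ0) + η • (φ - φk))) φ := by
  have hpayoff : (fun a => (c a + lam * logPol ψ φ0 a + η * logPol ψ φk a) -
        (lam + η) * logPol ψ φ a) =
      c - (fun a => ⟪ψ a, lam • (φ - φ0) + η • (φ - φk)⟫) +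
        fun _ => lam * (logPartition ψ φ - logPartition ψ φ0) +
          η * (logPartition ψ φ - logPartition ψ φk) := by
    funext a
    simp only [logPol, Pi.add_apply, Pi.sub_apply, inner_add_right, inner_sub_right,
      real_inner_smul_right]
    ring
  rw [funext (opoObjective_eq ψ c lam η φ0 φk)]
  convert hasGradientAt_sum_pol_mul_sub_logPol ψ φ _ (lam + η) using 1
  rw [hpayoff, map_add, map_sub, featCov_const, featCov_inner, add_zero]

end OPO

theorem inner_detPol {S A : Type*} [Fintype A] {d m : ℕ}
    (ψ : S → A → EuclideanSpace ℝ (Fin d)) (act : A → EuclideanSpace ℝ (Fin m))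
    (v : EuclideanSpace ℝ (Fin m)) (φ : EuclideanSpace ℝ (Fin d)) (s : S) :
    ⟪v, detPol ψ act φ s⟫ = ∑ a, pol (ψ s) φ a * ⟪v, act a⟫ := by
  simp only [detPol, inner_sum, real_inner_smul_right]

theorem stmt_2_general {S A : Type*} [Fintype S] [Fintype A] [Nonempty A] {d m : ℕ}
    (ψ : S → A → EuclideanSpace ℝ (Fin d)) (act : A → EuclideanSpace ℝ (Fin m))
    (θ : S → EuclideanSpace ℝ (Fin m))
    (w : S → ℝ)
    (lam η : ℝ) (hlam : 0 < lam) (hη : 0 < η)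
    (φ0 φk φk1 : EuclideanSpace ℝ (Fin d))
    -- φ_{k+1} is a stationary point of the OPO objective:
    (hstat : gradient (fun φ => ∑ s, w s *
        ((∑ a, pol (ψ s) φ a *
            (⟪θ s, act a⟫ - lam * Real.log (pol (ψ s) φ a / pol (ψ s) φ0 a))) -
          η * ∑ a, pol (ψ s) φ a * Real.log (pol (ψ s) φ a / pol (ψ s) φk a))) φk1 = 0)
    -- I_{φ_{k+1}} = E_{s∼D}[Var_{a∼π_{φ_{k+1}}}[ψ(s,a)]] is invertible, with inverse Iinv:
    (Iinv : EuclideanSpace ℝ (Fin d) → EuclideanSpace ℝ (Fin d))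
    (hIinv : ∀ v, (∑ s, w s • covApply (ψ s) φk1 (Iinv v)) = v ∧
      Iinv (∑ s, w s • covApply (ψ s) φk1 v) = v) :
    φk1 = (η + lam)⁻¹ • (η • φk + lam • φ0) +
      (η + lam)⁻¹ •
        Iinv (gradient (fun φ => ∑ s, w s * ⟪θ s, detPol ψ act φ s⟫) φk1) := by
  set c : S → A → ℝ := fun s a => ⟪θ s, act a⟫
  set v := lam • (φk1 - φ0) + η • (φk1 - φk)
  have hQ : HasGradientAt (fun φ => ∑ s, w s * ⟪θ s, detPol ψ act φ s⟫)
      (∑ s, w s • featCov (ψ s) φk1 (c s)) φk1 := by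
    simp only [inner_detPol]
    exact HasGradientAt.fun_sum fun s _ => (hasGradientAt_sum_pol_mul (ψ s) φk1 (c s)).const_mul _
  have hL : HasGradientAt (fun φ => ∑ s, w s * opoObjective (ψ s) (c s) lam η φ0 φk φ)
      (∑ s, w s • (featCov (ψ s) φk1 (c s) - covApply (ψ s) φk1 v)) φk1 :=
    HasGradientAt.fun_sum fun s _ =>
      (hasGradientAt_opoObjective (ψ s) (c s) lam η φ0 φk φk1).const_mul _
  have hbalance : ∑ s, w s • featCov (ψ s) φk1 (c s) = ∑ s, w s • covApply (ψ s) φk1 v := by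
    -- `hstat` is about the same function, with `opoObjective` unfolded
    simpa only [smul_sub, sum_sub_distrib, sub_eq_zero] using hL.gradient.symm.trans hstat
  rw [hQ.gradient, hbalance, (hIinv v).2, ← smul_add, eq_inv_smul_iff₀ (by positivity)]
  module

/-- Under linear parameterization π_φ ∝ exp(ψ(s,a)ᵀφ) and
Q_k(s,a) = θ_k(s)ᵀa, the stationary point φ_{k+1} of the OPO objective
L(φ) = E_s[⟨Q_k(s,·) − λ_k log(π_φ(·|s)/π_0(·|s)), π_φ(·|s)⟩ − η_k KL(π_φ(·|s)‖π_k(·|s))]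
satisfies φ_{k+1} = (η_k φ_k + λ_k φ_0)/(η_k + λ_k)
  + (η_k+λ_k)⁻¹ I_{φ_{k+1}}⁻¹ E_s[∇_a Q_k(s, Π_{φ_{k+1}}(s)) ∇_φ Π_{φ_{k+1}}(s)],
where the last expectation equals the gradient in φ of E_s[Q_k(s, Π_φ(s))] at φ_{k+1},
since Q_k(s, Π_φ(s)) = ⟪θ_k(s), Π_φ(s)⟫. States s are drawn from the dataset
distribution D, modeled by weights w on a finite state space. -/
theorem stmt_2 {S A : Type*} [Fintype S] [Fintype A] [Nonempty A] {d m : ℕ}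
    (ψ : S → A → EuclideanSpace ℝ (Fin d)) (act : A → EuclideanSpace ℝ (Fin m))
    (θ : S → EuclideanSpace ℝ (Fin m))
    (w : S → ℝ) (hw : (∀ s, 0 ≤ w s) ∧ ∑ s, w s = 1)
    (lam η : ℝ) (hlam : 0 < lam) (hη : 0 < η)
    (φ0 φk φk1 : EuclideanSpace ℝ (Fin d))
    -- φ_{k+1} is a stationary point of the OPO objective:
    (hstat : gradient (fun φ => ∑ s, w s *
        ((∑ a, pol (ψ s) φ a *
            (⟪θ s, act a⟫ - lam * Real.log (pol (ψ s) φ a / pol (ψ s) φ0 a))) -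
          η * ∑ a, pol (ψ s) φ a * Real.log (pol (ψ s) φ a / pol (ψ s) φk a))) φk1 = 0)
    -- I_{φ_{k+1}} = E_{s∼D}[Var_{a∼π_{φ_{k+1}}}[ψ(s,a)]] is invertible, with inverse Iinv:
    (Iinv : EuclideanSpace ℝ (Fin d) → EuclideanSpace ℝ (Fin d))
    (hIinv : ∀ v, (∑ s, w s • covApply (ψ s) φk1 (Iinv v)) = v ∧
      Iinv (∑ s, w s • covApply (ψ s) φk1 v) = v) :
    φk1 = (η + lam)⁻¹ • (η • φk + lam • φ0) +
      (η + lam)⁻¹ •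
        Iinv (gradient (fun φ => ∑ s, w s * ⟪θ s, detPol ψ act φ s⟫) φk1) :=
  stmt_2_general ψ act θ w lam η hlam hη φ0 φk φk1 hstat Iinv hIinv
end

section
/- If ‖Q_k‖_∞ ≤ (1−γ)^{-1}, λ_k ≥ 0, and f : A → ℝ satisfies the policy-improvement identity via the update π_{k+1} ∝ π_k^{η_k/(η_k+λ_k)} π_0^{λ_k/(η_k+λ_k)} exp(Q_k/(η_k+λ_k)), and ‖λ_k log(π_k/π_0) (up to constants in a)‖_∞ ≤ λ_k α⁴(1−α)^{-4}(1−γ)^{-1}, then (η_k+λ_k)^{-1}⟨Q_k(s,·) − λ_k log(π_k(·|s)/π_0(·|s)), π*(·|s) − π_k(·|s)⟩ ≤ KL(π*(·|s)‖π_k(·|s)) − KL(π*(·|s)‖π_{k+1}(·|s)) + (η_k+λ_k)^{-2}(1 + λ_k α⁴(1−α)^{-4})²(1−γ)^{-2}. -/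
open Finset

/-- KL divergence between two distributions on a finite action space. -/
noncomputable def klPol {A : Type*} [Fintype A] (p q : A → ℝ) : ℝ :=
  ∑ a, p a * Real.log (p a / q a)

/-! The update is an exponential tilt `π_{k+1} ∝ π_k · exp g` of `π_k`, with
`g = (Q_k − λ log (π_k / π_0)) / (η + λ)`, and by the two sup-norm bounds `g` oscillates around a
constant by at most `b = (1 + λ α⁴ (1 − α)⁻⁴) (1 − γ)⁻¹ / (η + λ)`. Since `log (π_{k+1} / π_k)` is
`g` up to an additive constant, the three-point identity for KL gives
`⟨g, π* − π_k⟩ = KL(π*‖π_k) − KL(π*‖π_{k+1}) − KL(π_{k+1}‖π_k) + ⟨g − c, π_{k+1} − π_k⟩`.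
Hölder bounds the last pairing by `b d` with `d = ‖π_{k+1} − π_k‖₁`, Pinsker bounds
`KL(π_{k+1}‖π_k)` below by `d² / 2`, and `b d − d² / 2 ≤ b² / 2`.

Pinsker's inequality is proved from the pointwise bound
`3 (x − 1)² ≤ 2 (x + 2) (x log x − x + 1)` and Cauchy–Schwarz in Sedrakyan's form. -/

open Real

theorem le_of_hasDerivAt_nonpos_of_nonneg {f f' : ℝ → ℝ} {a m x : ℝ} (hm : a < m) (hx : a < x)
    (hf : ∀ y ∈ Set.Ioi a, HasDerivAt f (f' y) y)
    (hleft : ∀ y ∈ Set.Ioo a m, f' y ≤ 0) (hright : ∀ y ∈ Set.Ioi m, 0 ≤ f' y) : f m ≤ f x := by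
  have hcont : ∀ s ⊆ Set.Ioi a, ContinuousOn f s := fun s hs y hy ↦
    (hf y (hs hy)).continuousAt.continuousWithinAt
  rcases le_total x m with hxm | hmx
  · refine antitoneOn_of_hasDerivWithinAt_nonpos (f' := f') (convex_Ioc a m)
      (hcont _ Set.Ioc_subset_Ioi_self) (fun y hy ↦ ?_) (fun y hy ↦ ?_) ⟨hx, hxm⟩ ⟨hm, le_rfl⟩ hxm
    all_goals rw [interior_Ioc] at hy
    · exact (hf y hy.1).hasDerivWithinAt
    · exact hleft y hy
  · have hsub : Set.Ici m ⊆ Set.Ioi a := Set.Ici_subset_Ioi.2 hm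
    refine monotoneOn_of_hasDerivWithinAt_nonneg (f' := f') (convex_Ici m) (hcont _ hsub)
      (fun y hy ↦ ?_) (fun y hy ↦ ?_) (Set.mem_Ici.2 le_rfl) hmx hmx
    all_goals rw [interior_Ici] at hy
    · exact (hf y (hsub (Set.mem_Ici.2 hy.le))).hasDerivWithinAt
    · exact hright y hy

theorem hasDerivAt_add_one_mul_log_sub {x : ℝ} (hx : 0 < x) :
    HasDerivAt (fun x ↦ (x + 1) * log x - 2 * (x - 1)) (log x + x⁻¹ - 1) x := by
  have h := (((hasDerivAt_id x).add_const 1).mul (hasDerivAt_log hx.ne')).sub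
    (((hasDerivAt_id x).sub_const 1).const_mul 2)
  refine h.congr_deriv ?_
  simp only [id]
  field_simp
  ring

theorem monotoneOn_add_one_mul_log_sub :
    MonotoneOn (fun x ↦ (x + 1) * log x - 2 * (x - 1)) (Set.Ioi 0) := by
  refine monotoneOn_of_hasDerivWithinAt_nonneg (f' := fun x ↦ log x + x⁻¹ - 1) (convex_Ioi 0)
    (fun x hx ↦ (hasDerivAt_add_one_mul_log_sub hx).continuousAt.continuousWithinAt)
    (fun x hx ↦ ?_) (fun x hx ↦ ?_)
  all_goals rw [interior_Ioi] at hx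
  · exact (hasDerivAt_add_one_mul_log_sub hx).hasDerivWithinAt
  · linarith [one_sub_inv_le_log_of_pos hx]

theorem three_mul_sq_sub_one_le {x : ℝ} (hx : 0 < x) :
    3 * (x - 1) ^ 2 ≤ 2 * (x + 2) * (x * log x - x + 1) := by
  have hderiv : ∀ y ∈ Set.Ioi (0 : ℝ), HasDerivAt
      (fun y ↦ 2 * (y + 2) * (y * log y - y + 1) - 3 * (y - 1) ^ 2)
      (4 * ((y + 1) * log y - 2 * (y - 1))) y := by
    intro y hy
    have hy : (0:ℝ) < y := hy
    have h := ((((hasDerivAt_id y).add_const 2).const_mul 2).mul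
      ((((hasDerivAt_id y).mul (hasDerivAt_log hy.ne')).sub (hasDerivAt_id y)).add_const 1)).sub
      ((((hasDerivAt_id y).sub_const 1).pow 2).const_mul 3)
    refine h.congr_deriv ?_
    simp only [id, Pi.sub_apply, Pi.mul_apply]
    field_simp
    ring
  have hmono := monotoneOn_add_one_mul_log_sub
  have h1 : (1 : ℝ) ∈ Set.Ioi 0 := Set.mem_Ioi.2 one_pos
  have := le_of_hasDerivAt_nonpos_of_nonneg one_pos hx hderiv
    (fun y hy ↦ by linarith [by simpa using hmono hy.1 h1 hy.2.le])
    (fun y hy ↦ by linarith [by simpa using hmono h1 (Set.mem_Ioi.2 (zero_lt_one.trans hy)) hy.le])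
  norm_num at this
  linarith

theorem three_mul_sq_sub_le {p q : ℝ} (hp : 0 < p) (hq : 0 < q) :
    3 * (p - q) ^ 2 ≤ 2 * (p + 2 * q) * (p * log (p / q) - p + q) := by
  have h := mul_le_mul_of_nonneg_left (three_mul_sq_sub_one_le (div_pos hp hq)) (sq_nonneg q)
  have hq0 : q ≠ 0 := hq.ne'
  have hl : q ^ 2 * (3 * (p / q - 1) ^ 2) = 3 * (p - q) ^ 2 := by field_simp
  have hr : q ^ 2 * (2 * (p / q + 2) * (p / q * log (p / q) - p / q + 1))
      = 2 * (p + 2 * q) * (p * log (p / q) - p + q) := by field_simp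
  rwa [hl, hr] at h

theorem rpow_mul_rpow_of_add_eq_one {x y s t : ℝ} (hx : 0 < x) (hy : 0 < y) (hst : s + t = 1) :
    x ^ s * y ^ t = x * exp (-(t * log (x / y))) := by
  have h : log x * s + log y * t = log x + -(t * log (x / y)) := by
    rw [log_div hx.ne' hy.ne']; linear_combination log x * hst
  rw [rpow_def_of_pos hx, rpow_def_of_pos hy, ← exp_add, h, exp_add, exp_log hx]

section Distributions

variable {A : Type*} [Fintype A]

theorem sq_sum_abs_sub_le_two_mul_klPol {p q : A → ℝ} (hp : ∀ a, 0 < p a) (hq : ∀ a, 0 < q a)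
    (hp1 : ∑ a, p a = 1) (hq1 : ∑ a, q a = 1) :
    (∑ a, |p a - q a|) ^ 2 ≤ 2 * klPol p q := by
  have hw : ∀ a ∈ univ, 0 < p a + 2 * q a := fun a _ ↦ by linarith [hp a, hq a]
  have hw3 : ∑ a, (p a + 2 * q a) = 3 := by
    rw [sum_add_distrib, ← mul_sum, hp1, hq1]; norm_num
  have hkl : klPol p q = ∑ a, (p a * log (p a / q a) - p a + q a) := by
    simp only [klPol, sum_add_distrib, sum_sub_distrib, hp1, hq1]
    ring
  calc (∑ a, |p a - q a|) ^ 2 = 3 * ((∑ a, |p a - q a|) ^ 2 / ∑ a, (p a + 2 * q a)) := by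
        rw [hw3]; ring
    _ ≤ 3 * ∑ a, |p a - q a| ^ 2 / (p a + 2 * q a) := by
        gcongr; exact sq_sum_div_le_sum_sq_div _ _ hw
    _ ≤ ∑ a, 2 * (p a * log (p a / q a) - p a + q a) := by
        rw [mul_sum]
        refine sum_le_sum fun a ha ↦ ?_
        rw [sq_abs, ← mul_div_assoc, div_le_iff₀ (hw a ha)]
        linarith [three_mul_sq_sub_le (hp a) (hq a)]
    _ = 2 * klPol p q := by rw [hkl, mul_sum]

theorem sum_mul_log_div_eq_klPol_sub_klPol {p q r : A → ℝ} (hp : ∀ a, 0 ≤ p a)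
    (hq : ∀ a, 0 < q a) (hr : ∀ a, 0 < r a) :
    ∑ a, p a * log (r a / q a) = klPol p q - klPol p r := by
  rw [klPol, klPol, ← sum_sub_distrib]
  refine sum_congr rfl fun a _ ↦ ?_
  rcases (hp a).eq_or_lt with h0 | hpos
  · simp [← h0]
  · rw [log_div (hr a).ne' (hq a).ne', log_div hpos.ne' (hq a).ne', log_div hpos.ne' (hr a).ne']
    ring

theorem sum_add_const_mul_sub {f u v : A → ℝ} (k : ℝ) (h : ∑ a, u a = ∑ a, v a) :
    ∑ a, (f a + k) * (u a - v a) = ∑ a, f a * (u a - v a) := by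
  simp only [add_mul, sum_add_distrib, ← mul_sum, sum_sub_distrib, h, sub_self, mul_zero,
    add_zero]

theorem sum_mul_le_mul_sum_abs {f u : A → ℝ} {b : ℝ} (hf : ∀ a, |f a| ≤ b) :
    ∑ a, f a * u a ≤ b * ∑ a, |u a| := by
  rw [mul_sum]
  refine sum_le_sum fun a _ ↦ ?_
  calc f a * u a ≤ |f a| * |u a| := by rw [← abs_mul]; exact le_abs_self _
    _ ≤ b * |u a| := mul_le_mul_of_nonneg_right (hf a) (abs_nonneg _)

noncomputable def expTilt (q g : A → ℝ) (a : A) : ℝ :=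
  q a * exp (g a) / ∑ b, q b * exp (g b)

variable {q : A → ℝ}

theorem sum_mul_exp_pos [Nonempty A] (hq : ∀ a, 0 < q a) (g : A → ℝ) :
    0 < ∑ b, q b * exp (g b) :=
  sum_pos (fun b _ ↦ mul_pos (hq b) (exp_pos _)) univ_nonempty

theorem expTilt_pos [Nonempty A] (hq : ∀ a, 0 < q a) (g : A → ℝ) (a : A) :
    0 < expTilt q g a :=
  div_pos (mul_pos (hq a) (exp_pos _)) (sum_mul_exp_pos hq g)

theorem sum_expTilt [Nonempty A] (hq : ∀ a, 0 < q a) (g : A → ℝ) :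
    ∑ a, expTilt q g a = 1 := by
  simp only [expTilt, ← sum_div]
  exact div_self (sum_mul_exp_pos hq g).ne'

theorem log_expTilt_div [Nonempty A] (hq : ∀ a, 0 < q a) (g : A → ℝ) (a : A) :
    log (expTilt q g a / q a) = g a - log (∑ b, q b * exp (g b)) := by
  have hZ := (sum_mul_exp_pos hq g).ne'
  have hqa := (hq a).ne'
  have h : expTilt q g a / q a = exp (g a) / ∑ b, q b * exp (g b) := by
    rw [expTilt]; field_simp
  rw [h, log_div (exp_pos _).ne' hZ, log_exp]

theorem sum_mul_sub_le_klPol_sub_klPol_expTilt {p g : A → ℝ} {c b : ℝ} (hp : ∀ a, 0 ≤ p a)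
    (hp1 : ∑ a, p a = 1) (hq : ∀ a, 0 < q a) (hq1 : ∑ a, q a = 1) (hg : ∀ a, |g a - c| ≤ b) :
    ∑ a, g a * (p a - q a) ≤ klPol p q - klPol p (expTilt q g) + b ^ 2 / 2 := by
  obtain ⟨a₀, -⟩ := nonempty_of_sum_ne_zero (hq1.trans_ne one_ne_zero)
  have : Nonempty A := ⟨a₀⟩
  set r := expTilt q g
  set Z := log (∑ b, q b * exp (g b))
  set L := fun a ↦ log (r a / q a) with hL
  have hr := expTilt_pos hq g
  have hr1 : ∑ a, r a = 1 := sum_expTilt hq g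
  have hgL : ∀ a, g a = L a + Z := fun a ↦ by simp only [hL, r, log_expTilt_div hq]; ring
  have hpair : ∑ a, g a * (p a - q a) = ∑ a, L a * (p a - q a) := by
    simp only [hgL]; exact sum_add_const_mul_sub Z (hp1.trans hq1.symm)
  have hsplit : ∑ a, L a * (p a - q a)
      = ∑ a, p a * L a - klPol r q + ∑ a, L a * (r a - q a) := by
    simp only [klPol, ← sum_sub_distrib, ← sum_add_distrib]
    exact sum_congr rfl fun a _ ↦ by ring
  have hholder : ∑ a, L a * (r a - q a) ≤ b * ∑ a, |r a - q a| := by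
    have h : ∀ a, L a = (g a - c) + (c - Z) := fun a ↦ by rw [hgL]; ring
    simp only [h]
    rw [sum_add_const_mul_sub _ (hr1.trans hq1.symm)]
    exact sum_mul_le_mul_sum_abs hg
  have hpinsker := sq_sum_abs_sub_le_two_mul_klPol hr hq hr1 hq1
  rw [hpair, hsplit, sum_mul_log_div_eq_klPol_sub_klPol hp hq hr]
  nlinarith [sq_nonneg (∑ a, |r a - q a| - b)]

theorem rpow_mul_rpow_mul_exp_div_sum_eq_expTilt {p₀ Q : A → ℝ} {η lam : ℝ} (hq : ∀ a, 0 < q a)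
    (hp₀ : ∀ a, 0 < p₀ a) (hβ : η + lam ≠ 0) (a : A) :
    q a ^ (η / (η + lam)) * p₀ a ^ (lam / (η + lam)) * exp (Q a / (η + lam)) /
        ∑ b, q b ^ (η / (η + lam)) * p₀ b ^ (lam / (η + lam)) * exp (Q b / (η + lam))
      = expTilt q (fun a ↦ (Q a - lam * log (q a / p₀ a)) / (η + lam)) a := by
  have hnum : ∀ a, q a ^ (η / (η + lam)) * p₀ a ^ (lam / (η + lam)) * exp (Q a / (η + lam))
      = q a * exp ((Q a - lam * log (q a / p₀ a)) / (η + lam)) := fun a ↦ by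
    rw [rpow_mul_rpow_of_add_eq_one (hq a) (hp₀ a) (by field_simp), mul_assoc, ← exp_add]
    congr 2
    ring
  simp only [expTilt, hnum]

end Distributions

theorem stmt_5_general {A : Type*} [Fintype A]
    (α γ η lam : ℝ)
    (hη : 0 < η) (hlam : 0 ≤ lam)
    (Q : A → ℝ) (hQ : ∀ a, |Q a| ≤ (1 - γ)⁻¹)
    (π0 πk πstar : A → ℝ)
    (hπ0 : (∀ a, 0 < π0 a) ∧ ∑ a, π0 a = 1)
    (hπk : (∀ a, 0 < πk a) ∧ ∑ a, πk a = 1)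
    (hπstar : (∀ a, 0 ≤ πstar a) ∧ ∑ a, πstar a = 1)
    (πk1 : A → ℝ)
    (hπk1 : ∀ a, πk1 a =
      πk a ^ (η / (η + lam)) * π0 a ^ (lam / (η + lam)) * Real.exp (Q a / (η + lam)) /
        ∑ b, πk b ^ (η / (η + lam)) * π0 b ^ (lam / (η + lam)) * Real.exp (Q b / (η + lam)))
    (hlog : ∃ c : ℝ, ∀ a,
      |lam * Real.log (πk a / π0 a) - c| ≤ lam * (α ^ 4 * ((1 - α) ^ 4)⁻¹) * (1 - γ)⁻¹) :
    (η + lam)⁻¹ * ∑ a, (Q a - lam * Real.log (πk a / π0 a)) * (πstar a - πk a)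
      ≤ klPol πstar πk - klPol πstar πk1 +
        ((η + lam) ^ 2)⁻¹ * (1 + lam * (α ^ 4 * ((1 - α) ^ 4)⁻¹)) ^ 2 * ((1 - γ) ^ 2)⁻¹ := by
  obtain ⟨hπ0pos, -⟩ := hπ0
  obtain ⟨hπkpos, hπksum⟩ := hπk
  obtain ⟨c, hc⟩ := hlog
  have hβ : 0 < η + lam := by linarith
  set B := (1 + lam * (α ^ 4 * ((1 - α) ^ 4)⁻¹)) * (1 - γ)⁻¹
  set g : A → ℝ := fun a ↦ (Q a - lam * log (πk a / π0 a)) / (η + lam) with hg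
  have hπk1_eq : πk1 = expTilt πk g := funext fun a ↦ by
    rw [hπk1 a, rpow_mul_rpow_mul_exp_div_sum_eq_expTilt hπkpos hπ0pos hβ.ne']
  have hgc : ∀ a, |g a - -c / (η + lam)| ≤ B / (η + lam) := fun a ↦ by
    have h : g a - -c / (η + lam) = (Q a - (lam * log (πk a / π0 a) - c)) / (η + lam) := by
      rw [hg]; ring
    rw [h, abs_div, abs_of_pos hβ]
    gcongr
    calc _ ≤ |Q a| + |lam * log (πk a / π0 a) - c| := abs_sub _ _
      _ ≤ _ := add_le_add (hQ a) (hc a)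
      _ = B := by ring
  have hB : ((η + lam) ^ 2)⁻¹ * (1 + lam * (α ^ 4 * ((1 - α) ^ 4)⁻¹)) ^ 2 * ((1 - γ) ^ 2)⁻¹
      = (B / (η + lam)) ^ 2 := by
    rw [div_pow, mul_pow, inv_pow]; ring
  calc _ = ∑ a, g a * (πstar a - πk a) := by rw [mul_sum]; exact sum_congr rfl fun a _ ↦ by ring
    _ ≤ klPol πstar πk - klPol πstar πk1 + (B / (η + lam)) ^ 2 / 2 := by
      rw [hπk1_eq]
      exact sum_mul_sub_le_klPol_sub_klPol_expTilt hπstar.1 hπstar.2 hπkpos hπksum hgc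
    _ ≤ _ := by rw [hB]; linarith [sq_nonneg (B / (η + lam))]

/-- Policy improvement lemma. If ‖Q_k‖_∞ ≤ (1−γ)⁻¹, λ_k ≥ 0, π_{k+1} is given
by the proximal update π_{k+1} ∝ π_k^{η/(η+λ)} π_0^{λ/(η+λ)} exp(Q_k/(η+λ)), and the
log-ratio satisfies ‖λ log(π_k/π_0) (up to constants in a)‖_∞ ≤ λ α⁴(1−α)^{-4}(1−γ)⁻¹, then
(η+λ)⁻¹⟨Q_k − λ log(π_k/π_0), π* − π_k⟩
  ≤ KL(π*‖π_k) − KL(π*‖π_{k+1}) + (η+λ)^{-2}(1 + λα⁴(1−α)^{-4})²(1−γ)^{-2}. -/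
theorem stmt_5 {A : Type*} [Fintype A] [Nonempty A]
    (α γ η lam : ℝ) (hα : 0 < α) (hα1 : α < 1) (hγ : 0 < γ) (hγ1 : γ < 1)
    (hη : 0 < η) (hlam : 0 ≤ lam)
    (Q : A → ℝ) (hQ : ∀ a, |Q a| ≤ (1 - γ)⁻¹)
    (π0 πk πstar : A → ℝ)
    (hπ0 : (∀ a, 0 < π0 a) ∧ ∑ a, π0 a = 1)
    (hπk : (∀ a, 0 < πk a) ∧ ∑ a, πk a = 1)
    (hπstar : (∀ a, 0 ≤ πstar a) ∧ ∑ a, πstar a = 1)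
    (πk1 : A → ℝ)
    (hπk1 : ∀ a, πk1 a =
      πk a ^ (η / (η + lam)) * π0 a ^ (lam / (η + lam)) * Real.exp (Q a / (η + lam)) /
        ∑ b, πk b ^ (η / (η + lam)) * π0 b ^ (lam / (η + lam)) * Real.exp (Q b / (η + lam)))
    (hlog : ∃ c : ℝ, ∀ a,
      |lam * Real.log (πk a / π0 a) - c| ≤ lam * (α ^ 4 * ((1 - α) ^ 4)⁻¹) * (1 - γ)⁻¹) :
    (η + lam)⁻¹ * ∑ a, (Q a - lam * Real.log (πk a / π0 a)) * (πstar a - πk a)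
      ≤ klPol πstar πk - klPol πstar πk1 +
        ((η + lam) ^ 2)⁻¹ * (1 + lam * (α ^ 4 * ((1 - α) ^ 4)⁻¹)) ^ 2 * ((1 - γ) ^ 2)⁻¹ :=
  stmt_5_general α γ η lam hη hlam Q hQ π0 πk πstar hπ0 hπk hπstar πk1 hπk1 hlog
end

section
/- The suboptimality V^{π*}(s_0) − V^{π̂}(s_0) decomposes exactly as −Σ_t γ^t E_{π̂}[ι(s_t,a_t)|s_0] + Σ_t γ^t E_{π*}[ι(s_t,a_t)|s_0] + Σ_t γ^t E_{π*}[⟨Q̂(s_t,·), π*(·|s_t) − π̂(·|s_t)⟩|s_0], where ι(s,a) = BQ̂(s,a) − B̂Q̂(s,a) is the epistemic error, and V^π̂ is computed from Q̂ via V̂(s) = ⟨Q̂(s,·), π̂(·|s)⟩ with Q̂ satisfying Q̂ = B̂Q̂. -/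
open Finset

/-- A (stationary, stochastic) policy on a finite MDP. -/
def IsPolicy {S A : Type*} [Fintype A] (π : S → A → ℝ) : Prop :=
  (∀ s a, 0 ≤ π s a) ∧ ∀ s, ∑ a, π s a = 1

/-- A Markov transition kernel on a finite MDP. -/
def IsKernel {S A : Type*} [Fintype S] (P : S → A → S → ℝ) : Prop :=
  (∀ s a s', 0 ≤ P s a s') ∧ ∀ s a, ∑ s', P s a s' = 1

/-- The state distribution at time t of the Markov chain started at s₀ and following
policy π in the MDP with transition kernel P. -/
noncomputable def distAt {S A : Type*} [Fintype S] [Fintype A] [DecidableEq S]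
    (P : S → A → S → ℝ) (π : S → A → ℝ) (s0 : S) : ℕ → S → ℝ
  | 0 => fun s => if s = s0 then 1 else 0
  | t + 1 => fun s' => ∑ s, ∑ a, distAt P π s0 t s * π s a * P s a s'

/-- The expectation E_π[f(s_t, a_t) | s₀] along trajectories of policy π. -/
noncomputable def expAt {S A : Type*} [Fintype S] [Fintype A] [DecidableEq S]
    (P : S → A → S → ℝ) (π : S → A → ℝ) (s0 : S) (t : ℕ) (f : S → A → ℝ) : ℝ :=
  ∑ s, ∑ a, distAt P π s0 t s * π s a * f s a

/-- The λ-regularized value V_λ^π(s₀) = E_π[Σ_t γ^t (r(s_t,a_t) − λ log(π(·|s_t)/π₀(·|s_t)))]. -/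
noncomputable def VReg {S A : Type*} [Fintype S] [Fintype A] [DecidableEq S]
    (P : S → A → S → ℝ) (r : S → A → ℝ) (γ lam : ℝ) (π0 π : S → A → ℝ) (s0 : S) : ℝ :=
  ∑' t : ℕ, γ ^ t * expAt P π s0 t (fun s a => r s a - lam * Real.log (π s a / π0 s a))

/-- The unregularized discounted value V^π(s₀) = Σ_t γ^t E_π[r(s_t,a_t) | s₀]. -/
noncomputable def Vval {S A : Type*} [Fintype S] [Fintype A] [DecidableEq S]
    (P : S → A → S → ℝ) (r : S → A → ℝ) (γ : ℝ) (π : S → A → ℝ) (s0 : S) : ℝ :=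
  ∑' t : ℕ, γ ^ t * expAt P π s0 t r

/-!
Write `V̂(s) = ⟨Q̂(s,·), π̂(·|s)⟩`, so that `ι = r + γ P V̂ − Q̂`. Along the trajectory of any policy
`π`, `γ^t E_π[γ (P V̂)(s_t,a_t)] = γ^{t+1} E_π[V̂(s_{t+1})]`, so summing `γ^t E_π[ι]` telescopes:
`Σ_t γ^t E_π[ι] = V^π(s₀) − V̂(s₀) + Σ_t γ^t E_π[V̂(s_t) − Q̂(s_t,a_t)]`.
For `π = π̂` the last sum vanishes; for `π = π*` it is minus the policy-mismatch term.
Subtracting the two identities gives the decomposition.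
-/

theorem Summable.tsum_succ_sub_self {g : ℕ → ℝ} (hg : Summable g) :
    ∑' t, (g (t + 1) - g t) = -g 0 := by
  rw [Summable.tsum_sub ((summable_nat_add_iff 1).mpr hg) hg, hg.tsum_eq_zero_add]
  ring

section MarkovChain

variable {S A : Type*} [Fintype S] [Fintype A] [DecidableEq S]
  {P : S → A → S → ℝ} {π : S → A → ℝ} {s0 : S}

theorem distAt_nonneg (hP : IsKernel P) (hπ : IsPolicy π) (t : ℕ) (s : S) :
    0 ≤ distAt P π s0 t s := by
  induction t generalizing s with
  | zero => simp only [distAt]; split_ifs <;> norm_num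
  | succ t ih =>
    exact sum_nonneg fun s _ => sum_nonneg fun a _ =>
      mul_nonneg (mul_nonneg (ih s) (hπ.1 s a)) (hP.1 s a _)

theorem sum_distAt (hP : IsKernel P) (hπ : IsPolicy π) (t : ℕ) :
    ∑ s, distAt P π s0 t s = 1 := by
  induction t with
  | zero => simp [distAt]
  | succ t ih =>
    simp only [distAt]
    rw [sum_comm]
    simp only [sum_comm (γ := S), ← mul_sum, hP.2, mul_one, hπ.2, ih]

variable (P π s0)

theorem expAt_eq_sum_distAt_mul (t : ℕ) (f : S → A → ℝ) :
    expAt P π s0 t f = ∑ s, distAt P π s0 t s * ∑ a, π s a * f s a := by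
  simp only [expAt, mul_sum, mul_assoc]

theorem expAt_add (t : ℕ) (f g : S → A → ℝ) :
    expAt P π s0 t (fun s a => f s a + g s a) = expAt P π s0 t f + expAt P π s0 t g := by
  simp only [expAt, mul_add, sum_add_distrib]

theorem expAt_sub (t : ℕ) (f g : S → A → ℝ) :
    expAt P π s0 t (fun s a => f s a - g s a) = expAt P π s0 t f - expAt P π s0 t g := by
  simp only [expAt, mul_sub, sum_sub_distrib]

theorem expAt_const_mul (t : ℕ) (c : ℝ) (f : S → A → ℝ) :
    expAt P π s0 t (fun s a => c * f s a) = c * expAt P π s0 t f := by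
  simp only [expAt, mul_sum, mul_left_comm c]

variable {P π s0}

theorem expAt_state (hπ : IsPolicy π) (t : ℕ) (v : S → ℝ) :
    expAt P π s0 t (fun s _ => v s) = ∑ s, distAt P π s0 t s * v s := by
  simp only [expAt_eq_sum_distAt_mul, ← sum_mul, hπ.2, one_mul]

theorem expAt_zero_state (hπ : IsPolicy π) (v : S → ℝ) :
    expAt P π s0 0 (fun s _ => v s) = v s0 := by
  simp [expAt_state hπ, distAt]

theorem expAt_succ_state (hπ : IsPolicy π) (t : ℕ) (v : S → ℝ) :
    expAt P π s0 (t + 1) (fun s _ => v s) =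
      expAt P π s0 t (fun s a => ∑ s', P s a s' * v s') := by
  rw [expAt_state hπ]
  simp only [distAt, expAt, sum_mul, mul_sum]
  rw [sum_comm]
  refine sum_congr rfl fun s _ => ?_
  rw [sum_comm]
  exact sum_congr rfl fun a _ => sum_congr rfl fun s' _ => by ring

theorem abs_expAt_le (hP : IsKernel P) (hπ : IsPolicy π) (t : ℕ) {f : S → A → ℝ} {C : ℝ}
    (hC : ∀ s a, |f s a| ≤ C) : |expAt P π s0 t f| ≤ C := by
  have hw : ∀ s a, 0 ≤ distAt P π s0 t s * π s a := fun s a =>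
    mul_nonneg (distAt_nonneg hP hπ t s) (hπ.1 s a)
  calc |expAt P π s0 t f| ≤ ∑ s, ∑ a, distAt P π s0 t s * π s a * |f s a| := by
        refine (abs_sum_le_sum_abs _ _).trans (sum_le_sum fun s _ => ?_)
        refine (abs_sum_le_sum_abs _ _).trans (sum_le_sum fun a _ => ?_)
        rw [abs_mul, abs_of_nonneg (hw s a)]
    _ ≤ ∑ s, ∑ a, distAt P π s0 t s * π s a * C :=
        sum_le_sum fun s _ => sum_le_sum fun a _ => mul_le_mul_of_nonneg_left (hC s a) (hw s a)
    _ = C := by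
        simp only [← sum_mul, ← mul_sum, hπ.2, mul_one, sum_distAt hP hπ, one_mul]

theorem summable_discounted_expAt (hP : IsKernel P) (hπ : IsPolicy π) {γ : ℝ} (hγ : 0 ≤ γ)
    (hγ1 : γ < 1) (f : S → A → ℝ) : Summable fun t => γ ^ t * expAt P π s0 t f := by
  obtain ⟨C, hC⟩ := Finite.exists_le fun p : S × A => |f p.1 p.2|
  refine Summable.of_norm_bounded ((summable_geometric_of_lt_one hγ hγ1).mul_right C) fun t => ?_
  rw [Real.norm_eq_abs, abs_mul, abs_pow, abs_of_nonneg hγ]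
  exact mul_le_mul_of_nonneg_left (abs_expAt_le hP hπ t fun s a => hC (s, a)) (pow_nonneg hγ t)

theorem tsum_discounted_expAt_bellman_residual (hP : IsKernel P) (hπ : IsPolicy π) {γ : ℝ}
    (hγ : 0 ≤ γ) (hγ1 : γ < 1) (r Q ι : S → A → ℝ) (v : S → ℝ)
    (hι : ∀ s a, ι s a = r s a + γ * ∑ s', P s a s' * v s' - Q s a) :
    ∑' t, γ ^ t * expAt P π s0 t ι =
      Vval P r γ π s0 - v s0 + ∑' t, γ ^ t * expAt P π s0 t (fun s a => v s - Q s a) := by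
  have hsum := summable_discounted_expAt (s0 := s0) hP hπ hγ hγ1
  set g : ℕ → ℝ := fun t => γ ^ t * expAt P π s0 t (fun s _ => v s)
  have hstep : ∀ t, γ ^ t * expAt P π s0 t ι = γ ^ t * expAt P π s0 t r + (g (t + 1) - g t) +
      γ ^ t * expAt P π s0 t (fun s a => v s - Q s a) := by
    intro t
    have hι' : ι = fun s a =>
        r s a + γ * ∑ s', P s a s' * v s' - v s + (v s - Q s a) := by
      funext s a; rw [hι]; ring
    simp only [g, hι', expAt_add, expAt_sub, expAt_const_mul, expAt_succ_state hπ]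
    ring
  rw [tsum_congr hstep, Summable.tsum_add ((hsum r).add ?_) (hsum _),
    Summable.tsum_add (hsum r) ?_, (hsum _).tsum_succ_sub_self]
  · simp only [Vval, pow_zero, one_mul, expAt_zero_state hπ]
    ring
  all_goals exact ((summable_nat_add_iff 1).mpr (hsum _)).sub (hsum _)

end MarkovChain

theorem stmt_16_general {S A : Type*} [Fintype S] [Fintype A] [DecidableEq S]
    (P : S → A → S → ℝ) (hP : IsKernel P)
    (r : S → A → ℝ) (γ : ℝ) (hγ : 0 < γ) (hγ1 : γ < 1) (s0 : S)
    (πstar πhat : S → A → ℝ) (hπstar : IsPolicy πstar) (hπhat : IsPolicy πhat)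
    (Qhat hatBQ : S → A → ℝ)
    -- Q̂ is the fixed point of the empirical Bellman operator, Q̂ = B̂Q̂:
    (hfix : ∀ s a, Qhat s a = hatBQ s a)
    -- the epistemic error ι = BQ̂ − B̂Q̂, with V̂(s) = ⟨Q̂(s,·), π̂(·|s)⟩:
    (ι : S → A → ℝ)
    (hι : ∀ s a, ι s a =
      (r s a + γ * ∑ s', P s a s' * ∑ a', πhat s' a' * Qhat s' a') - hatBQ s a) :
    Vval P r γ πstar s0 - Vval P r γ πhat s0 =
      -(∑' t : ℕ, γ ^ t * expAt P πhat s0 t ι) +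
        (∑' t : ℕ, γ ^ t * expAt P πstar s0 t ι) +
        ∑' t : ℕ, γ ^ t * ∑ s, distAt P πstar s0 t s *
          ∑ a, Qhat s a * (πstar s a - πhat s a) := by
  set vhat : S → ℝ := fun s => ∑ a, πhat s a * Qhat s a
  have hι' : ∀ s a, ι s a = r s a + γ * ∑ s', P s a s' * vhat s' - Qhat s a := fun s a => by
    rw [hι, hfix]
  have hπhat_gap : ∀ t, expAt P πhat s0 t (fun s a => vhat s - Qhat s a) = 0 := fun t => by
    simp only [expAt_eq_sum_distAt_mul, mul_sub, sum_sub_distrib, ← sum_mul, hπhat.2, one_mul,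
      vhat, sub_self, mul_zero, sum_const_zero]
  have hπstar_gap : ∀ t, expAt P πstar s0 t (fun s a => vhat s - Qhat s a) =
      -∑ s, distAt P πstar s0 t s * ∑ a, Qhat s a * (πstar s a - πhat s a) := fun t => by
    rw [expAt_eq_sum_distAt_mul, ← sum_neg_distrib]
    refine sum_congr rfl fun s _ => ?_
    simp only [vhat, mul_sub, sum_sub_distrib, ← sum_mul, hπstar.2, one_mul]
    simp only [mul_comm (Qhat s _)]
    ring
  have hhat := tsum_discounted_expAt_bellman_residual (s0 := s0) hP hπhat hγ.le hγ1 r Qhat ι vhat hι'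
  have hstar := tsum_discounted_expAt_bellman_residual (s0 := s0) hP hπstar hγ.le hγ1 r Qhat ι vhat hι'
  simp only [hπhat_gap, mul_zero, tsum_zero] at hhat
  simp only [hπstar_gap, mul_neg, tsum_neg] at hstar
  linarith

/-- The suboptimality V^{π*}(s₀) − V^{π̂}(s₀) decomposes exactly as
−Σ_t γ^t E_{π̂}[ι(s_t,a_t)|s₀] + Σ_t γ^t E_{π*}[ι(s_t,a_t)|s₀]
  + Σ_t γ^t E_{π*}[⟨Q̂(s_t,·), π*(·|s_t) − π̂(·|s_t)⟩|s₀],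
where ι = BQ̂ − B̂Q̂ is the epistemic error, B̂Q̂ fixed by Q̂ = B̂Q̂, the true Bellman
operator is BQ̂(s,a) = r(s,a) + γ E_{s'∼P(·|s,a)}[V̂(s')], and V̂(s) = ⟨Q̂(s,·), π̂(·|s)⟩. -/
theorem stmt_16 {S A : Type*} [Fintype S] [Fintype A] [DecidableEq S] [Nonempty A]
    (P : S → A → S → ℝ) (hP : IsKernel P)
    (r : S → A → ℝ) (γ : ℝ) (hγ : 0 < γ) (hγ1 : γ < 1) (s0 : S)
    (πstar πhat : S → A → ℝ) (hπstar : IsPolicy πstar) (hπhat : IsPolicy πhat)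
    -- π* is the optimal policy:
    (hopt : ∀ π : S → A → ℝ, IsPolicy π → Vval P r γ π s0 ≤ Vval P r γ πstar s0)
    (Qhat hatBQ : S → A → ℝ)
    -- Q̂ is the fixed point of the empirical Bellman operator, Q̂ = B̂Q̂:
    (hfix : ∀ s a, Qhat s a = hatBQ s a)
    -- the epistemic error ι = BQ̂ − B̂Q̂, with V̂(s) = ⟨Q̂(s,·), π̂(·|s)⟩:
    (ι : S → A → ℝ)
    (hι : ∀ s a, ι s a =
      (r s a + γ * ∑ s', P s a s' * ∑ a', πhat s' a' * Qhat s' a') - hatBQ s a) :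
    Vval P r γ πstar s0 - Vval P r γ πhat s0 =
      -(∑' t : ℕ, γ ^ t * expAt P πhat s0 t ι) +
        (∑' t : ℕ, γ ^ t * expAt P πstar s0 t ι) +
        ∑' t : ℕ, γ ^ t * ∑ s, distAt P πstar s0 t s *
          ∑ a, Qhat s a * (πstar s a - πhat s a) :=
  stmt_16_general P hP r γ hγ hγ1 s0 πstar πhat hπstar hπhat Qhat hatBQ hfix ι hι
end
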